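/- arXiv:2204.02477 — 2 statements merged into one kernel-verified Lean document; each statement's English description precedes it below -/
import Mathlib

section
/- For the standard normal distribution and winsorizing proportions 0 ≤ a < 1−b ≤ 1 with a + b < 1, the winsorized moment constants satisfy c₂ − c₁² > 0, where c_k = a[Φ⁻¹(a)]^k + ∫_a^{1−b}[Φ⁻¹(v)]^k dv + b[Φ⁻¹(1−b)]^k. -/
open MeasureTheory ProbabilityTheory Set Filter

noncomputable def stdPhi (x : ℝ) : ℝ :=
  ∫ t in Set.Iic x, Real.exp (-t ^ 2 / 2) / Real.sqrt (2 * Real.pi)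

noncomputable def stdphi (x : ℝ) : ℝ := Real.exp (-x ^ 2 / 2) / Real.sqrt (2 * Real.pi)

theorem stmt7 (a b : ℝ) (Φinv : ℝ → ℝ)
    (hΦinv : ∀ v ∈ Set.Ioo (0 : ℝ) 1, stdPhi (Φinv v) = v)
    (ha : 0 ≤ a) (hb : 0 ≤ b) (hab : a < 1 - b) (hb1 : 1 - b ≤ 1)
    (hint1 : IntervalIntegrable Φinv MeasureTheory.volume a (1 - b))
    (hint2 : IntervalIntegrable (fun v => (Φinv v) ^ 2) MeasureTheory.volume a (1 - b)) :
    (a * Φinv a + (∫ v in a..(1 - b), Φinv v) + b * Φinv (1 - b)) ^ 2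
      < a * (Φinv a) ^ 2 + (∫ v in a..(1 - b), (Φinv v) ^ 2)
        + b * (Φinv (1 - b)) ^ 2 := by
  have hlen : a ≤ 1 - b := le_of_lt hab
  set pa := Φinv a with hpa
  set pb := Φinv (1 - b) with hpb
  set I1 := (∫ v in a..(1 - b), Φinv v) with hI1
  set I2 := (∫ v in a..(1 - b), (Φinv v) ^ 2) with hI2
  set c1 := a * pa + I1 + b * pb with hc1
  have hgfun : ∀ v : ℝ, (Φinv v - c1) ^ 2 = (Φinv v) ^ 2 - (2 * c1) * Φinv v + c1 ^ 2 := by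
    intro v; ring
  have hg_int : IntervalIntegrable (fun v => (Φinv v - c1) ^ 2) volume a (1 - b) := by
    have : (fun v => (Φinv v - c1) ^ 2)
        = fun v => (Φinv v) ^ 2 - (2 * c1) * Φinv v + c1 ^ 2 := funext hgfun
    rw [this]
    exact (hint2.sub (hint1.const_mul _)).add intervalIntegrable_const
  have expand : (∫ v in a..(1 - b), (Φinv v - c1) ^ 2)
      = I2 - 2 * c1 * I1 + (1 - b - a) * c1 ^ 2 := by
    simp only [hgfun]
    rw [intervalIntegral.integral_add (hint2.sub (hint1.const_mul _)) intervalIntegrable_const,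
        intervalIntegral.integral_sub hint2 (hint1.const_mul _),
        intervalIntegral.integral_const_mul, intervalIntegral.integral_const]
    simp only [smul_eq_mul, ← hI1, ← hI2]
    try ring
  -- injectivity of Φinv on (0,1)
  have hinj : ∀ u ∈ Set.Ioo (0 : ℝ) 1, ∀ v ∈ Set.Ioo (0 : ℝ) 1, Φinv u = Φinv v → u = v := by
    intro u hu v hv h
    rw [← hΦinv u hu, ← hΦinv v hv, h]
  have hsubI : Set.Ioo a (1 - b) ⊆ Set.Ioo (0 : ℝ) 1 := fun x hx =>
    ⟨lt_of_le_of_lt ha hx.1, lt_of_lt_of_le hx.2 hb1⟩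
  -- positivity of the integral term
  have hpos : 0 < ∫ v in a..(1 - b), (Φinv v - c1) ^ 2 := by
    rw [intervalIntegral.integral_of_le hlen]
    have hintOn : IntegrableOn (fun v => (Φinv v - c1) ^ 2) (Set.Ioc a (1 - b)) volume :=
      hg_int.1
    rw [MeasureTheory.setIntegral_pos_iff_support_of_nonneg_ae
      (Filter.Eventually.of_forall fun v => sq_nonneg _) hintOn]
    have hBsub : ({v | Φinv v = c1} ∩ Set.Ioo a (1 - b)).Subsingleton := by
      intro u hu v hv
      exact hinj u (hsubI hu.2) v (hsubI hv.2) (hu.1.trans hv.1.symm)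
    have hBnull : volume ({v | Φinv v = c1} ∩ Set.Ioo a (1 - b)) = 0 :=
      hBsub.measure_zero _
    have hss : Set.Ioo a (1 - b) \ ({v | Φinv v = c1} ∩ Set.Ioo a (1 - b))
        ⊆ Function.support (fun v => (Φinv v - c1) ^ 2) ∩ Set.Ioc a (1 - b) := by
      intro v hv
      refine ⟨?_, Set.Ioo_subset_Ioc_self hv.1⟩
      have hne : Φinv v ≠ c1 := fun h => hv.2 ⟨h, hv.1⟩
      simp only [Function.mem_support]
      exact pow_ne_zero _ (sub_ne_zero.mpr hne)
    have hmeas : volume (Set.Ioo a (1 - b) \ ({v | Φinv v = c1} ∩ Set.Ioo a (1 - b)))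
        = volume (Set.Ioo a (1 - b)) := measure_diff_null hBnull
    have hIoo : (0 : ENNReal) < volume (Set.Ioo a (1 - b)) := by
      rw [Real.volume_Ioo]
      exact ENNReal.ofReal_pos.mpr (by linarith)
    calc (0 : ENNReal) < volume (Set.Ioo a (1 - b)) := hIoo
      _ = volume (Set.Ioo a (1 - b) \ ({v | Φinv v = c1} ∩ Set.Ioo a (1 - b))) := hmeas.symm
      _ ≤ volume (Function.support (fun v => (Φinv v - c1) ^ 2) ∩ Set.Ioc a (1 - b)) :=
          measure_mono hss
  have key : a * pa ^ 2 + I2 + b * pb ^ 2 - c1 ^ 2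
      = a * (pa - c1) ^ 2 + (∫ v in a..(1 - b), (Φinv v - c1) ^ 2) + b * (pb - c1) ^ 2 := by
    rw [expand, hc1]; ring
  have h1 : 0 ≤ a * (pa - c1) ^ 2 := mul_nonneg ha (sq_nonneg _)
  have h2 : 0 ≤ b * (pb - c1) ^ 2 := mul_nonneg hb (sq_nonneg _)
  have : 0 < a * pa ^ 2 + I2 + b * pb ^ 2 - c1 ^ 2 := by rw [key]; linarith
  linarith
end

section
/- Let γ ∈ ℝ and define Δ_s := Φ⁻¹(s + (1−s)Φ(γ)) for s ∈ [0,1), and c_{y,k}(a,b,γ) := a·Δ_a^k + ∫_a^{1−b} Δ_s^k ds + b·Δ_{1−b}^k. Then for fixed a, b with 0 ≤ a < 1−b ≤ 1 and each k ≥ 1, lim_{γ → −∞} c_{y,k}(a,b,γ) = a[Φ⁻¹(a)]^k + ∫_a^{1−b}[Φ⁻¹(s)]^k ds + b[Φ⁻¹(1−b)]^k. -/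
open MeasureTheory ProbabilityTheory Set Filter

lemma stdphi_pos (x : ℝ) : 0 < stdphi x := by
  have h : 0 < Real.sqrt (2 * Real.pi) := Real.sqrt_pos.2 (by positivity)
  exact div_pos (Real.exp_pos _) h

lemma stdphi_eq (x : ℝ) : stdphi x = Real.exp (-(1/2) * x ^ 2) / Real.sqrt (2 * Real.pi) := by
  rw [stdphi]; ring_nf

lemma integrable_stdphi : Integrable stdphi := by
  have := (integrable_exp_neg_mul_sq (b := 1/2) (by norm_num)).div_const (Real.sqrt (2 * Real.pi))
  exact this.congr (by filter_upwards with x; rw [stdphi_eq])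

lemma continuous_stdphi : Continuous stdphi := by
  unfold stdphi; fun_prop

lemma integral_stdphi : ∫ x, stdphi x = 1 := by
  have h : ∫ x, stdphi x = (∫ x : ℝ, Real.exp (-(1/2) * x ^ 2)) / Real.sqrt (2 * Real.pi) := by
    rw [← integral_div]; exact integral_congr_ae (by filter_upwards with x; rw [stdphi_eq])
  rw [h, integral_gaussian]
  rw [show Real.pi / (1/2) = 2 * Real.pi by ring]
  exact div_self (by positivity)

lemma stdPhi_eq (x : ℝ) : stdPhi x = ∫ t in Set.Iic x, stdphi t := rfl

lemma stdPhi_strictMono : StrictMono stdPhi := by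
  intro x y hxy
  have h1 : Set.Iic y = Set.Iic x ∪ Set.Ioc x y := (Set.Iic_union_Ioc_eq_Iic hxy.le).symm
  have hint : ∀ s : Set ℝ, IntegrableOn stdphi s := fun s => integrable_stdphi.integrableOn
  rw [stdPhi_eq, stdPhi_eq, h1,
    setIntegral_union (Set.Iic_disjoint_Ioc le_rfl) measurableSet_Ioc (hint _) (hint _)]
  have hpos : 0 < ∫ t in Set.Ioc x y, stdphi t := by
    rw [setIntegral_pos_iff_support_of_nonneg_ae]
    · have : Function.support stdphi = Set.univ := by
        ext t; simp [Function.support, (stdphi_pos t).ne']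
      rw [this, Set.univ_inter, Real.volume_Ioc]
      simp [hxy, ENNReal.ofReal_pos]
    · filter_upwards with t using (stdphi_pos t).le
    · exact hint _
  linarith


lemma setIntegral_stdphi_pos {s : Set ℝ} (hs : MeasurableSet s) (h : 0 < volume s) :
    0 < ∫ t in s, stdphi t := by
  rw [setIntegral_pos_iff_support_of_nonneg_ae]
  · have : Function.support stdphi = Set.univ := by
      ext t; simp [Function.support, (stdphi_pos t).ne']
    rwa [this, Set.univ_inter]
  · filter_upwards with t using (stdphi_pos t).le
  · exact integrable_stdphi.integrableOn

lemma stdPhi_pos (x : ℝ) : 0 < stdPhi x := by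
  rw [stdPhi_eq]
  exact setIntegral_stdphi_pos measurableSet_Iic (by simp)

lemma stdPhi_add_Ioi (x : ℝ) : stdPhi x + ∫ t in Set.Ioi x, stdphi t = 1 := by
  rw [stdPhi_eq, intervalIntegral.integral_Iic_add_Ioi integrable_stdphi.integrableOn
    integrable_stdphi.integrableOn, integral_stdphi]

lemma stdPhi_lt_one (x : ℝ) : stdPhi x < 1 := by
  have := setIntegral_stdphi_pos measurableSet_Ioi (by simp : 0 < volume (Set.Ioi x))
  linarith [stdPhi_add_Ioi x]

lemma stdPhi_mem_Ioo (x : ℝ) : stdPhi x ∈ Set.Ioo (0:ℝ) 1 := ⟨stdPhi_pos x, stdPhi_lt_one x⟩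

lemma tendsto_stdPhi_atBot : Tendsto stdPhi atBot (nhds 0) := by
  have h : Tendsto (fun γ : ℝ => ∫ t, (Set.Iic γ).indicator stdphi t) atBot
      (nhds (∫ _ : ℝ, (0:ℝ))) := by
    apply tendsto_integral_filter_of_dominated_convergence stdphi
    · filter_upwards with γ
      exact integrable_stdphi.aestronglyMeasurable.indicator measurableSet_Iic
    · filter_upwards with γ
      filter_upwards with t
      calc ‖(Set.Iic γ).indicator stdphi t‖ ≤ ‖stdphi t‖ := norm_indicator_le_norm_self _ _
        _ = stdphi t := abs_of_pos (stdphi_pos t)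
    · exact integrable_stdphi
    · filter_upwards with t
      apply Tendsto.congr' _ (tendsto_const_nhds (x := (0:ℝ)))
      filter_upwards [eventually_lt_atBot t] with γ hγ
      rw [Set.indicator_of_notMem (by simpa using hγ.not_ge)]
  simp only [integral_zero] at h
  apply h.congr
  intro γ
  rw [integral_indicator measurableSet_Iic, stdPhi_eq]


noncomputable def stdMoment (k : ℕ) : ℝ := ∫ t : ℝ, t ^ (2 * k) * stdphi t

lemma integrable_moment (k : ℕ) : Integrable (fun t : ℝ => t ^ (2 * k) * stdphi t) := by
  have hs : (-1:ℝ) < ((2 * k : ℕ) : ℝ) := lt_of_lt_of_le (by norm_num) (Nat.cast_nonneg _)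
  have h := (integrable_rpow_mul_exp_neg_mul_sq (b := 1/2) (by norm_num) hs).div_const
    (Real.sqrt (2 * Real.pi))
  apply h.congr
  filter_upwards with t
  rw [Real.rpow_natCast, stdphi_eq]
  ring

lemma stdMoment_nonneg (k : ℕ) : 0 ≤ stdMoment k := by
  apply integral_nonneg
  intro t
  have h1 : (0:ℝ) ≤ t ^ (2 * k) := by
    rw [pow_mul]; positivity
  exact mul_nonneg h1 (stdphi_pos t).le

lemma pow_le_moment_aux {x t : ℝ} (k : ℕ) (h : x ^ 2 ≤ t ^ 2) :
    stdphi t * x ^ (2 * k) ≤ t ^ (2 * k) * stdphi t := by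
  rw [mul_comm (stdphi t)]
  apply mul_le_mul_of_nonneg_right _ (stdphi_pos t).le
  rw [pow_mul, pow_mul]
  exact pow_le_pow_left₀ (sq_nonneg x) h k

lemma tail_bound_left {x : ℝ} (hx : x < 0) (k : ℕ) :
    stdPhi x * x ^ (2 * k) ≤ stdMoment k := by
  have h1 : stdPhi x * x ^ (2 * k) = ∫ t in Set.Iic x, stdphi t * x ^ (2 * k) := by
    rw [stdPhi_eq, ← integral_mul_const]
  rw [h1]
  calc ∫ t in Set.Iic x, stdphi t * x ^ (2 * k)
      ≤ ∫ t in Set.Iic x, t ^ (2 * k) * stdphi t := by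
        apply setIntegral_mono_on (integrable_stdphi.integrableOn.mul_const _)
          (integrable_moment k).integrableOn measurableSet_Iic
        intro t ht
        exact pow_le_moment_aux k (by nlinarith [Set.mem_Iic.1 ht])
    _ ≤ stdMoment k := by
        apply setIntegral_le_integral (integrable_moment k)
        filter_upwards with t
        have h1 : (0:ℝ) ≤ t ^ (2 * k) := by rw [pow_mul]; positivity
        exact mul_nonneg h1 (stdphi_pos t).le

lemma tail_bound_right {x : ℝ} (hx : 0 < x) (k : ℕ) :
    (1 - stdPhi x) * x ^ (2 * k) ≤ stdMoment k := by
  have h0 : 1 - stdPhi x = ∫ t in Set.Ioi x, stdphi t := by linarith [stdPhi_add_Ioi x]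
  have h1 : (1 - stdPhi x) * x ^ (2 * k) = ∫ t in Set.Ioi x, stdphi t * x ^ (2 * k) := by
    rw [h0, ← integral_mul_const]
  rw [h1]
  calc ∫ t in Set.Ioi x, stdphi t * x ^ (2 * k)
      ≤ ∫ t in Set.Ioi x, t ^ (2 * k) * stdphi t := by
        apply setIntegral_mono_on (integrable_stdphi.integrableOn.mul_const _)
          (integrable_moment k).integrableOn measurableSet_Ioi
        intro t ht
        exact pow_le_moment_aux k (by nlinarith [Set.mem_Ioi.1 ht])
    _ ≤ stdMoment k := by
        apply setIntegral_le_integral (integrable_moment k)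
        filter_upwards with t
        have h1 : (0:ℝ) ≤ t ^ (2 * k) := by rw [pow_mul]; positivity
        exact mul_nonneg h1 (stdphi_pos t).le


section
variable {Φinv : ℝ → ℝ} (hΦinv : ∀ v ∈ Set.Ioo (0 : ℝ) 1, stdPhi (Φinv v) = v)
include hΦinv

lemma lt_phiInv_of_stdPhi_lt {v c : ℝ} (hv : v ∈ Set.Ioo (0:ℝ) 1) (h : stdPhi c < v) :
    c < Φinv v := by
  by_contra hle
  push_neg at hle
  have h2 := stdPhi_strictMono.monotone hle
  rw [hΦinv v hv] at h2
  linarith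

lemma phiInv_lt_of_lt_stdPhi {v c : ℝ} (hv : v ∈ Set.Ioo (0:ℝ) 1) (h : v < stdPhi c) :
    Φinv v < c := by
  by_contra hle
  push_neg at hle
  have h2 := stdPhi_strictMono.monotone hle
  rw [hΦinv v hv] at h2
  linarith

lemma tendsto_phiInv {α : Type*} {l : Filter α} {f : α → ℝ} {v : ℝ}
    (hv : v ∈ Set.Ioo (0:ℝ) 1) (hf : Tendsto f l (nhds v))
    (hmem : ∀ᶠ x in l, f x ∈ Set.Ioo (0:ℝ) 1) :
    Tendsto (fun x => Φinv (f x)) l (nhds (Φinv v)) := by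
  rw [tendsto_order]
  constructor
  · intro c hc
    have h1 : stdPhi c < v := by
      have h2 := stdPhi_strictMono hc
      rwa [hΦinv v hv] at h2
    filter_upwards [hf.eventually (eventually_gt_nhds h1), hmem] with x h2 h3
    exact lt_phiInv_of_stdPhi_lt hΦinv h3 h2
  · intro c hc
    have h1 : v < stdPhi c := by
      have h2 := stdPhi_strictMono hc
      rwa [hΦinv v hv] at h2
    filter_upwards [hf.eventually (eventually_lt_nhds h1), hmem] with x h2 h3
    exact phiInv_lt_of_lt_stdPhi hΦinv h3 h2

lemma continuousOn_phiInv : ContinuousOn Φinv (Set.Ioo 0 1) := by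
  intro v hv
  exact tendsto_phiInv hΦinv hv (tendsto_id.mono_left nhdsWithin_le_nhds)
    eventually_mem_nhdsWithin

lemma abs_phiInv_pow_le (k : ℕ) (hk : 1 ≤ k) {v : ℝ} (hv : v ∈ Set.Ioo (0:ℝ) 1) :
    |Φinv v| ^ k ≤ Real.sqrt (stdMoment k / v) + Real.sqrt (stdMoment k / (1 - v)) := by
  set x := Φinv v with hx
  have hPx : stdPhi x = v := hΦinv v hv
  have hsq : (|x| ^ k) ^ 2 = x ^ (2 * k) := by
    rw [← pow_mul, mul_comm k 2, pow_mul, sq_abs, ← pow_mul]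
  rcases lt_trichotomy x 0 with h | h | h
  · have hb := tail_bound_left h k
    rw [hPx] at hb
    have h3 : (|x| ^ k) ^ 2 ≤ stdMoment k / v := by
      rw [hsq, le_div_iff₀ hv.1, mul_comm]; exact hb
    have h4 : |x| ^ k ≤ Real.sqrt (stdMoment k / v) :=
      Real.le_sqrt_of_sq_le h3
    have h5 : 0 ≤ Real.sqrt (stdMoment k / (1 - v)) := Real.sqrt_nonneg _
    linarith
  · rw [h, abs_zero, zero_pow (by omega : k ≠ 0)]
    positivity
  · have hb := tail_bound_right h k
    rw [hPx] at hb
    have h1v : 0 < 1 - v := by linarith [hv.2]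
    have h3 : (|x| ^ k) ^ 2 ≤ stdMoment k / (1 - v) := by
      rw [hsq, le_div_iff₀ h1v, mul_comm]; exact hb
    have h4 : |x| ^ k ≤ Real.sqrt (stdMoment k / (1 - v)) :=
      Real.le_sqrt_of_sq_le h3
    have h5 : 0 ≤ Real.sqrt (stdMoment k / v) := Real.sqrt_nonneg _
    linarith

end

lemma mem_aux {s c : ℝ} (hs : s ∈ Set.Ioo (0:ℝ) 1) (hc : c ∈ Set.Ioo (0:ℝ) 1) :
    s + (1 - s) * c ∈ Set.Ioo (0:ℝ) 1 := by
  obtain ⟨h1, h2⟩ := hs; obtain ⟨h3, h4⟩ := hc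
  constructor <;> nlinarith


lemma sqrt_div_eq {M s : ℝ} (hM : 0 ≤ M) (hs : 0 ≤ s) :
    Real.sqrt (M / s) = Real.sqrt M * s ^ (-(1/2) : ℝ) := by
  rw [div_eq_mul_inv, Real.sqrt_mul hM, Real.sqrt_inv, Real.rpow_neg hs, ← Real.sqrt_eq_rpow]

lemma integrableOn_sqrt_div {M a c : ℝ} (hM : 0 ≤ M) (ha : 0 ≤ a) (hac : a ≤ c) :
    IntegrableOn (fun s => Real.sqrt (M / s)) (Set.Ioc a c) := by
  have h0 : IntervalIntegrable (fun x : ℝ => x ^ (-(1/2) : ℝ)) volume a c :=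
    intervalIntegral.intervalIntegrable_rpow' (by norm_num)
  have h1 : IntegrableOn (fun x : ℝ => x ^ (-(1/2) : ℝ)) (Set.Ioc a c) := h0.1
  have h2 := h1.const_mul (Real.sqrt M)
  apply IntegrableOn.congr_fun h2 _ measurableSet_Ioc
  intro s hs
  exact (sqrt_div_eq hM (le_trans ha hs.1.le)).symm

lemma integrableOn_sqrt_div_one_sub {M a c : ℝ} (hM : 0 ≤ M) (hc : c ≤ 1) (hac : a ≤ c) :
    IntegrableOn (fun s => Real.sqrt (M / (1 - s))) (Set.Ioc a c) := by
  have h0 : IntervalIntegrable (fun x : ℝ => x ^ (-(1/2) : ℝ)) volume (1 - a) (1 - c) :=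
    intervalIntegral.intervalIntegrable_rpow' (by norm_num)
  have h1 := h0.comp_sub_left 1
  simp only [sub_sub_cancel] at h1
  have h2 : IntegrableOn (fun x : ℝ => (1 - x) ^ (-(1/2) : ℝ)) (Set.Ioc a c) := h1.1
  have h3 := h2.const_mul (Real.sqrt M)
  apply IntegrableOn.congr_fun h3 _ measurableSet_Ioc
  intro s hs
  exact (sqrt_div_eq hM (by linarith [hs.2])).symm

theorem stmt9 (a b : ℝ) (k : ℕ) (hk : 1 ≤ k)
    (ha : 0 ≤ a) (hab : a < 1 - b) (hb1 : 1 - b ≤ 1)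
    (Φinv : ℝ → ℝ)
    (hΦinv : ∀ v ∈ Set.Ioo (0 : ℝ) 1, stdPhi (Φinv v) = v) :
    Filter.Tendsto
      (fun γ : ℝ =>
        a * (Φinv (a + (1 - a) * stdPhi γ)) ^ k
          + (∫ s in a..(1 - b), (Φinv (s + (1 - s) * stdPhi γ)) ^ k)
          + b * (Φinv ((1 - b) + b * stdPhi γ)) ^ k)
      Filter.atBot
      (nhds (a * (Φinv a) ^ k + (∫ s in a..(1 - b), (Φinv s) ^ k)
        + b * (Φinv (1 - b)) ^ k)) := by
  have hb0 : 0 ≤ b := by linarith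
  have ha1 : a < 1 := lt_of_lt_of_le hab hb1
  -- First term
  have T1 : Tendsto (fun γ : ℝ => a * (Φinv (a + (1 - a) * stdPhi γ)) ^ k) atBot
      (nhds (a * (Φinv a) ^ k)) := by
    rcases eq_or_lt_of_le ha with h0 | h0
    · simp only [← h0, zero_mul]
      exact tendsto_const_nhds
    · have haI : a ∈ Set.Ioo (0:ℝ) 1 := ⟨h0, ha1⟩
      have hf : Tendsto (fun γ : ℝ => a + (1 - a) * stdPhi γ) atBot (nhds a) := by
        have h := (tendsto_stdPhi_atBot.const_mul (1 - a)).const_add a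
        simpa using h
      have hmem : ∀ᶠ γ in (atBot : Filter ℝ), a + (1 - a) * stdPhi γ ∈ Set.Ioo (0:ℝ) 1 :=
        Eventually.of_forall fun γ => mem_aux haI (stdPhi_mem_Ioo γ)
      exact ((tendsto_phiInv hΦinv haI hf hmem).pow k).const_mul a
  -- Third term
  have T3 : Tendsto (fun γ : ℝ => b * (Φinv ((1 - b) + b * stdPhi γ)) ^ k) atBot
      (nhds (b * (Φinv (1 - b)) ^ k)) := by
    rcases eq_or_lt_of_le hb0 with h0 | h0
    · simp only [← h0, zero_mul]
      exact tendsto_const_nhds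
    · have hbI : (1 - b) ∈ Set.Ioo (0:ℝ) 1 := ⟨lt_of_le_of_lt ha hab, by linarith⟩
      have hf : Tendsto (fun γ : ℝ => (1 - b) + b * stdPhi γ) atBot (nhds (1 - b)) := by
        have h := (tendsto_stdPhi_atBot.const_mul b).const_add (1 - b)
        simpa using h
      have hmem : ∀ᶠ γ in (atBot : Filter ℝ), (1 - b) + b * stdPhi γ ∈ Set.Ioo (0:ℝ) 1 := by
        apply Eventually.of_forall fun γ => ?_
        have h := mem_aux hbI (stdPhi_mem_Ioo γ)
        rwa [show 1 - (1 - b) = b by ring] at h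
      exact ((tendsto_phiInv hΦinv hbI hf hmem).pow k).const_mul b
  -- Middle term
  have hrw : ∀ h : ℝ → ℝ, (∫ s in a..(1 - b), h s) = ∫ s in Set.Ioo a (1 - b), h s := by
    intro h
    rw [intervalIntegral.integral_of_le hab.le, integral_Ioc_eq_integral_Ioo]
  have hsmem : ∀ s ∈ Set.Ioo a (1 - b), s ∈ Set.Ioo (0:ℝ) 1 := fun s hs =>
    ⟨lt_of_le_of_lt ha hs.1, lt_of_lt_of_le hs.2 hb1⟩
  set M := stdMoment k with hM
  have hM0 : 0 ≤ M := stdMoment_nonneg k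
  have hΦ01 : 0 < 1 - stdPhi 0 := by linarith [stdPhi_lt_one 0]
  set D := Real.sqrt ((1 - stdPhi 0)⁻¹) with hD
  set g : ℝ → ℝ := fun s => Real.sqrt (M / s) + Real.sqrt (M / (1 - s)) * D with hg
  have T2 : Tendsto (fun γ : ℝ => ∫ s in Set.Ioo a (1 - b), (Φinv (s + (1 - s) * stdPhi γ)) ^ k)
      atBot (nhds (∫ s in Set.Ioo a (1 - b), (Φinv s) ^ k)) := by
    apply tendsto_integral_filter_of_dominated_convergence g
    · -- measurability
      filter_upwards with γ
      have hco : ContinuousOn (fun s : ℝ => (Φinv (s + (1 - s) * stdPhi γ)) ^ k)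
          (Set.Ioo a (1 - b)) := by
        have hinner : ContinuousOn (fun s : ℝ => s + (1 - s) * stdPhi γ)
            (Set.Ioo a (1 - b)) :=
          (continuous_id.add
            ((continuous_const.sub continuous_id).mul continuous_const)).continuousOn
        have hmaps : Set.MapsTo (fun s : ℝ => s + (1 - s) * stdPhi γ)
            (Set.Ioo a (1 - b)) (Set.Ioo 0 1) :=
          fun s hs => mem_aux (hsmem s hs) (stdPhi_mem_Ioo γ)
        exact ContinuousOn.pow (ContinuousOn.comp (continuousOn_phiInv hΦinv) hinner hmaps) k
      exact hco.aestronglyMeasurable measurableSet_Ioo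
    · -- bound
      filter_upwards [eventually_le_atBot (0:ℝ)] with γ hγ
      filter_upwards [ae_restrict_mem measurableSet_Ioo] with s hs
      have hsI := hsmem s hs
      have hs0 : 0 < s := hsI.1
      have hcI := stdPhi_mem_Ioo γ
      have hcΦ0 : stdPhi γ ≤ stdPhi 0 := stdPhi_strictMono.monotone hγ
      set c := stdPhi γ
      have huI : s + (1 - s) * c ∈ Set.Ioo (0:ℝ) 1 := mem_aux hsI hcI
      set u := s + (1 - s) * c with hu
      have hstep1 : |Φinv u| ^ k ≤ Real.sqrt (M / u) + Real.sqrt (M / (1 - u)) :=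
        abs_phiInv_pow_le hΦinv k hk huI
      have hsu : s ≤ u := by
        have : 0 ≤ (1 - s) * c := mul_nonneg (by linarith [hsI.2]) hcI.1.le
        linarith
      have hstep2 : Real.sqrt (M / u) ≤ Real.sqrt (M / s) := by
        apply Real.sqrt_le_sqrt
        exact div_le_div_of_nonneg_left hM0 hs0 hsu
      have h1u : 1 - u = (1 - s) * (1 - c) := by rw [hu]; ring
      have h1s : 0 < 1 - s := by linarith [hsI.2]
      have hstep3 : Real.sqrt (M / (1 - u)) ≤ Real.sqrt (M / (1 - s)) * D := by
        have key : M / (1 - u) ≤ (M / (1 - s)) * (1 - stdPhi 0)⁻¹ := by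
          rw [h1u, ← div_div, div_eq_mul_inv (M / (1 - s))]
          apply mul_le_mul_of_nonneg_left _ (div_nonneg hM0 h1s.le)
          apply inv_anti₀ hΦ01
          linarith
        calc Real.sqrt (M / (1 - u)) ≤ Real.sqrt ((M / (1 - s)) * (1 - stdPhi 0)⁻¹) :=
              Real.sqrt_le_sqrt key
          _ = Real.sqrt (M / (1 - s)) * D := Real.sqrt_mul (div_nonneg hM0 h1s.le) _
      calc ‖(Φinv u) ^ k‖ = |Φinv u| ^ k := by rw [Real.norm_eq_abs, abs_pow]
        _ ≤ Real.sqrt (M / u) + Real.sqrt (M / (1 - u)) := hstep1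
        _ ≤ Real.sqrt (M / s) + Real.sqrt (M / (1 - s)) * D := by linarith
    · -- integrability of bound
      apply Integrable.add
      · exact ((integrableOn_sqrt_div hM0 ha hab.le).mono_set Set.Ioo_subset_Ioc_self)
      · exact (((integrableOn_sqrt_div_one_sub hM0 hb1 hab.le).mono_set
          Set.Ioo_subset_Ioc_self).mul_const D)
    · -- pointwise limit
      filter_upwards [ae_restrict_mem measurableSet_Ioo] with s hs
      have hsI := hsmem s hs
      have hin : Tendsto (fun γ : ℝ => s + (1 - s) * stdPhi γ) atBot (nhds s) := by
        have h := (tendsto_stdPhi_atBot.const_mul (1 - s)).const_add s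
        simpa using h
      exact (tendsto_phiInv hΦinv hsI hin
        (Eventually.of_forall fun γ => mem_aux hsI (stdPhi_mem_Ioo γ))).pow k
  rw [hrw]
  simp only [hrw]
  exact (T1.add T2).add T3
end
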